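/- arXiv:2203.16693 — 7 statements merged into one kernel-verified Lean document; each statement's English description precedes it below -/
import Mathlib

section
/- Let (X,·) be a finite non-degenerate cycle set and for x ∈ X let σ_x denote the bijection y ↦ x·y. Define r : X × X → X × X by r(x,y) = (σ_x^{-1}(y), σ_x^{-1}(y)·x). Then r satisfies the set-theoretic Yang–Baxter (braid) relation (r×id)(id×r)(r×id) = (id×r)(r×id)(id×r), r is involutive (r∘r = id), and r is non-degenerate, i.e. writing r(x,y) = (λ_x(y), ρ_y(x)), all the maps λ_x and ρ_x are bijections of X. -/
/-!
Writing `r (x, x·a) = (a, a·x)`, involutivity is immediate. For the braid relation, parametrise a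
triple as `(x, x·a, (a·x)·(a·c))`: both sides then evaluate to `(c, c·a, _)`, and the cycle law
identifies the last coordinates. For right non-degeneracy, the cycle law applied to `x·u = y` reads
`T (ρ_y x) = y·T x` with `T` the squaring map, so `ρ_y = T⁻¹ ∘ σ_y ∘ T` is a bijection.
-/

/-- The map `r × id` on triples. -/
def rOne {X : Type*} (r : X × X → X × X) : X × X × X → X × X × X :=
  fun p => ((r (p.1, p.2.1)).1, (r (p.1, p.2.1)).2, p.2.2)

/-- The map `id × r` on triples. -/
def rTwo {X : Type*} (r : X × X → X × X) : X × X × X → X × X × X :=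
  fun p => (p.1, r (p.2.1, p.2.2))

namespace CycleSet

variable {X : Type*} (σ : X → Equiv.Perm X)

def solution (p : X × X) : X × X :=
  ((σ p.1).symm p.2, σ ((σ p.1).symm p.2) p.1)

@[simp]
theorem solution_apply_mul (x a : X) : solution σ (x, σ x a) = (a, σ a x) := by
  simp [solution]

theorem solution_involutive : Function.Involutive (solution σ) := by
  rintro ⟨x, y⟩
  obtain ⟨a, rfl⟩ := (σ x).surjective y
  simp

theorem solution_fst_bijective (x : X) : Function.Bijective fun y => (solution σ (x, y)).1 :=
  (σ x).symm.bijective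

variable {σ}

theorem solution_braid (hlaw : ∀ x y z, σ (σ x y) (σ x z) = σ (σ y x) (σ y z)) :
    rOne (solution σ) ∘ rTwo (solution σ) ∘ rOne (solution σ) =
      rTwo (solution σ) ∘ rOne (solution σ) ∘ rTwo (solution σ) := by
  funext ⟨x, y, z⟩
  obtain ⟨a, rfl⟩ := (σ x).surjective y
  obtain ⟨b, rfl⟩ := (σ (σ a x)).surjective z
  obtain ⟨c, rfl⟩ := (σ a).surjective b
  simp only [Function.comp_apply, rOne, rTwo, solution_apply_mul]
  rw [hlaw a x c, solution_apply_mul, solution_apply_mul, hlaw x c a, solution_apply_mul,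
    hlaw a c x]

theorem sq_solution_snd (hlaw : ∀ x y z, σ (σ x y) (σ x z) = σ (σ y x) (σ y z))
    (x y : X) :
    σ (solution σ (x, y)).2 (solution σ (x, y)).2 = σ y (σ x x) := by
  obtain ⟨u, rfl⟩ := (σ x).surjective y
  simpa using (hlaw x u x).symm

theorem solution_snd_bijective (hlaw : ∀ x y z, σ (σ x y) (σ x z) = σ (σ y x) (σ y z))
    (hsq : Function.Bijective fun x => σ x x) (y : X) :
    Function.Bijective fun x => (solution σ (x, y)).2 := by
  rw [← hsq.of_comp_iff']
  have hconj : ((fun x => σ x x) ∘ fun x => (solution σ (x, y)).2) = σ y ∘ fun x => σ x x :=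
    funext fun x => sq_solution_snd hlaw x y
  rw [hconj]
  exact (σ y).bijective.comp hsq

end CycleSet

theorem stmt0_general {X : Type*} (op : X → X → X)
    (hbij : ∀ x, Function.Bijective (op x))
    (hlaw : ∀ x y z, op (op x y) (op x z) = op (op y x) (op y z))
    (hnd : Function.Bijective fun x => op x x) :
    ∀ r : X × X → X × X,
      (∀ x y, r (x, y) =
        ((Equiv.ofBijective (op x) (hbij x)).symm y,
          op ((Equiv.ofBijective (op x) (hbij x)).symm y) x)) →
      (rOne r ∘ rTwo r ∘ rOne r = rTwo r ∘ rOne r ∘ rTwo r) ∧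
      (∀ p, r (r p) = p) ∧
      (∀ x, Function.Bijective fun y => (r (x, y)).1) ∧
      (∀ y, Function.Bijective fun x => (r (x, y)).2) := by
  intro r hr
  obtain rfl : r = CycleSet.solution fun x => Equiv.ofBijective (op x) (hbij x) :=
    funext fun ⟨x, y⟩ => hr x y
  exact ⟨CycleSet.solution_braid hlaw, CycleSet.solution_involutive _,
    CycleSet.solution_fst_bijective _, CycleSet.solution_snd_bijective hlaw hnd⟩

theorem stmt0 {X : Type*} [Finite X] (op : X → X → X)
    (hbij : ∀ x, Function.Bijective (op x))
    (hlaw : ∀ x y z, op (op x y) (op x z) = op (op y x) (op y z))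
    (hnd : Function.Bijective fun x => op x x) :
    ∀ r : X × X → X × X,
      (∀ x y, r (x, y) =
        ((Equiv.ofBijective (op x) (hbij x)).symm y,
          op ((Equiv.ofBijective (op x) (hbij x)).symm y) x)) →
      (rOne r ∘ rTwo r ∘ rOne r = rTwo r ∘ rOne r ∘ rTwo r) ∧
      (∀ p, r (r p) = p) ∧
      (∀ x, Function.Bijective fun y => (r (x, y)).1) ∧
      (∀ y, Function.Bijective fun x => (r (x, y)).2) :=
  stmt0_general op hbij hlaw hnd
end

section
/- Let X be a set and r : X × X → X × X a map satisfying the braid relation (r×id)(id×r)(r×id) = (id×r)(r×id)(id×r), which is involutive (r∘r = id) and non-degenerate, i.e. writing r(x,y) = (λ_x(y), ρ_y(x)), all maps λ_x and ρ_x are bijections of X. Then the binary operation x·y := λ_x^{-1}(y) makes X a non-degenerate cycle set, and moreover r(x,y) = (σ_x^{-1}(y), σ_x^{-1}(y)·x) where σ_x(y) = x·y. -/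
open Function

section Solution

variable {X : Type*} {r : X × X → X × X} {lam rho : X → X → X}

theorem lam_lam_rho_of_involutive (hr : ∀ x y, r (x, y) = (lam x y, rho y x))
    (hinv : ∀ p, r (r p) = p) (x y : X) : lam (lam x y) (rho y x) = x := by
  simpa only [hr] using congrArg Prod.fst (hinv (x, y))

theorem rho_rho_lam_of_involutive (hr : ∀ x y, r (x, y) = (lam x y, rho y x))
    (hinv : ∀ p, r (r p) = p) (x y : X) : rho (rho y x) (lam x y) = y := by
  simpa only [hr] using congrArg Prod.snd (hinv (x, y))

theorem lam_lam_lam_rho_of_braid (hr : ∀ x y, r (x, y) = (lam x y, rho y x))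
    (hbraid : rOne r ∘ rTwo r ∘ rOne r = rTwo r ∘ rOne r ∘ rTwo r) (x y z : X) :
    lam (lam x y) (lam (rho y x) z) = lam x (lam y z) := by
  simpa only [rOne, rTwo, comp_apply, hr] using congrArg Prod.fst (congrFun hbraid (x, y, z))

theorem lam_eq_self_iff_rho_eq_self (hr : ∀ x y, r (x, y) = (lam x y, rho y x))
    (hinv : ∀ p, r (r p) = p) (hlam : ∀ x, Injective (lam x)) (hrho : ∀ x, Injective (rho x))
    (x y : X) : lam x y = x ↔ rho y x = y := by
  constructor
  · intro h
    have := lam_lam_rho_of_involutive hr hinv x y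
    rw [h] at this
    exact hlam x (this.trans h.symm)
  · intro h
    have := rho_rho_lam_of_involutive hr hinv x y
    rw [h] at this
    exact hrho y (this.trans h.symm)

end Solution

section CycleSet

variable {X : Type*} {lam op : X → X → X}

theorem op_eq_iff_of_lam_op (hop : ∀ x y, lam x (op x y) = y) (hlam : ∀ x, Injective (lam x))
    (x y z : X) : op x y = z ↔ lam x z = y :=
  ⟨by rintro rfl; exact hop x y, fun h => hlam x (by rw [hop, h])⟩

theorem bijective_op_of_lam_op (hop : ∀ x y, lam x (op x y) = y)
    (hlam : ∀ x, Injective (lam x)) (x : X) : Bijective (op x) :=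
  bijective_iff_has_inverse.mpr
    ⟨lam x, hop x, fun y => (op_eq_iff_of_lam_op hop hlam x _ y).mpr rfl⟩

variable {r : X × X → X × X} {rho : X → X → X}

theorem rho_eq_op_lam (hr : ∀ x y, r (x, y) = (lam x y, rho y x)) (hinv : ∀ p, r (r p) = p)
    (hop : ∀ x y, lam x (op x y) = y) (hlam : ∀ x, Injective (lam x)) (x y : X) :
    rho y x = op (lam x y) x :=
  ((op_eq_iff_of_lam_op hop hlam _ _ _).mpr (lam_lam_rho_of_involutive hr hinv x y)).symm

theorem rho_op_eq_op (hr : ∀ x y, r (x, y) = (lam x y, rho y x)) (hinv : ∀ p, r (r p) = p)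
    (hop : ∀ x y, lam x (op x y) = y) (hlam : ∀ x, Injective (lam x)) (x y : X) :
    rho (op x y) x = op y x := by
  rw [rho_eq_op_lam hr hinv hop hlam, hop]

theorem lam_lam_op_comm (hr : ∀ x y, r (x, y) = (lam x y, rho y x)) (hinv : ∀ p, r (r p) = p)
    (hbraid : rOne r ∘ rTwo r ∘ rOne r = rTwo r ∘ rOne r ∘ rTwo r)
    (hop : ∀ x y, lam x (op x y) = y) (hlam : ∀ x, Injective (lam x)) (x y z : X) :
    lam x (lam (op x y) z) = lam y (lam (op y x) z) := by
  have := lam_lam_lam_rho_of_braid hr hbraid x (op x y) z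
  rw [hop, rho_op_eq_op hr hinv hop hlam] at this
  exact this.symm

theorem op_op_op_comm (hr : ∀ x y, r (x, y) = (lam x y, rho y x)) (hinv : ∀ p, r (r p) = p)
    (hbraid : rOne r ∘ rTwo r ∘ rOne r = rTwo r ∘ rOne r ∘ rTwo r)
    (hop : ∀ x y, lam x (op x y) = y) (hlam : ∀ x, Injective (lam x)) (x y z : X) :
    op (op x y) (op x z) = op (op y x) (op y z) := by
  rw [op_eq_iff_of_lam_op hop hlam, eq_comm, op_eq_iff_of_lam_op hop hlam,
    lam_lam_op_comm hr hinv hbraid hop hlam, hop, hop]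

theorem bijective_op_self (hr : ∀ x y, r (x, y) = (lam x y, rho y x)) (hinv : ∀ p, r (r p) = p)
    (hop : ∀ x y, lam x (op x y) = y) (hlam : ∀ x, Injective (lam x))
    (hrho : ∀ x, Bijective (rho x)) : Bijective (fun x => op x x) := by
  refine (bijective_iff_existsUnique _).mpr fun y => ?_
  simp only [op_eq_iff_of_lam_op hop hlam,
    lam_eq_self_iff_rho_eq_self hr hinv hlam fun x => (hrho x).injective]
  exact (bijective_iff_existsUnique _).mp (hrho y) y

end CycleSet

theorem stmt1 {X : Type*} (r : X × X → X × X) (lam rho : X → X → X)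
    (hr : ∀ x y, r (x, y) = (lam x y, rho y x))
    (hlam : ∀ x, Function.Bijective (lam x))
    (hrho : ∀ x, Function.Bijective (rho x))
    (hbraid : rOne r ∘ rTwo r ∘ rOne r = rTwo r ∘ rOne r ∘ rTwo r)
    (hinv : ∀ p, r (r p) = p) :
    ∀ op : X → X → X, (∀ x y, lam x (op x y) = y) →
      (∀ x, Function.Bijective (op x)) ∧
      (∀ x y z, op (op x y) (op x z) = op (op y x) (op y z)) ∧
      Function.Bijective (fun x => op x x) ∧
      (∀ x y, r (x, y) = (lam x y, op (lam x y) x)) := by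
  intro op hop
  have hlam' : ∀ x, Injective (lam x) := fun x => (hlam x).injective
  refine ⟨bijective_op_of_lam_op hop hlam', op_op_op_comm hr hinv hbraid hop hlam',
    bijective_op_self hr hinv hop hlam' hrho, fun x y => ?_⟩
  rw [hr, rho_eq_op_lam hr hinv hop hlam']
end

section
/- Let (X,·) be a cycle set and for x ∈ X let σ_x denote the bijection y ↦ x·y. The relation x ∼ y :⇔ σ_x = σ_y is a congruence of X: if σ_x = σ_y and σ_u = σ_v, then σ_{x·u} = σ_{y·v}. Consequently the quotient set X/∼ inherits a well-defined cycle set structure (the retraction of X). -/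
/-!
In the form `σ_{x·y} ∘ σ_x = σ_{y·x} ∘ σ_y` the cycle law has a right side that depends on `y`
only through `σ_y`; as `σ_x` is surjective, so does `σ_{x·y}`. Hence `ker σ` is a congruence,
and the induced operation on the quotient inherits the cycle law and the surjectivity of each
`σ_a`, which on a finite set is bijectivity.
-/

namespace CycleSet

variable {X : Type*} (op : X → X → X)

theorem op_op_eq_of_op_eq (hsurj : ∀ x, Function.Surjective (op x))
    (hlaw : ∀ x y z, op (op x y) (op x z) = op (op y x) (op y z))
    {x y u v : X} (hxy : op x = op y) (huv : op u = op v) :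
    op (op x u) = op (op y v) := by
  funext w
  obtain ⟨z, rfl⟩ := hsurj x w
  rw [hlaw, huv, ← hlaw, hxy]

/-- The retraction of `op`: the operation induced on the classes of `x ∼ y ↔ σ_x = σ_y`. -/
def retract (hsurj : ∀ x, Function.Surjective (op x))
    (hlaw : ∀ x y z, op (op x y) (op x z) = op (op y x) (op y z)) :
    Quotient (Setoid.ker op) → Quotient (Setoid.ker op) → Quotient (Setoid.ker op) :=
  Quotient.map₂ op fun _ _ hxy _ _ huv => op_op_eq_of_op_eq op hsurj hlaw hxy huv

variable {op} (hsurj : ∀ x, Function.Surjective (op x))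
  (hlaw : ∀ x y z, op (op x y) (op x z) = op (op y x) (op y z))

theorem retract_mk (x y : X) :
    retract op hsurj hlaw (Quotient.mk _ x) (Quotient.mk _ y) = Quotient.mk _ (op x y) :=
  rfl

theorem retract_surjective (a : Quotient (Setoid.ker op)) :
    Function.Surjective (retract op hsurj hlaw a) := by
  induction a using Quotient.ind with
  | _ x => exact .of_comp (g := Quotient.mk _) (Quotient.mk_surjective.comp (hsurj x))

theorem retract_bijective [Finite X] (a : Quotient (Setoid.ker op)) :
    Function.Bijective (retract op hsurj hlaw a) :=
  Finite.injective_iff_bijective.mp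
    (Finite.injective_iff_surjective.mpr (retract_surjective hsurj hlaw a))

theorem retract_law (a b c : Quotient (Setoid.ker op)) :
    retract op hsurj hlaw (retract op hsurj hlaw a b) (retract op hsurj hlaw a c) =
      retract op hsurj hlaw (retract op hsurj hlaw b a) (retract op hsurj hlaw b c) := by
  induction a, b, c using Quotient.inductionOn₃ with
  | _ x y z => exact congrArg (Quotient.mk _) (hlaw x y z)

end CycleSet

open CycleSet in
theorem stmt2_general {X : Type*} [Finite X] (op : X → X → X)
    (hbij : ∀ x, Function.Bijective (op x))
    (hlaw : ∀ x y z, op (op x y) (op x z) = op (op y x) (op y z)) :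
    (∀ x y u v : X, op x = op y → op u = op v → op (op x u) = op (op y v)) ∧
    ∃ qop : Quotient (Setoid.ker op) → Quotient (Setoid.ker op) → Quotient (Setoid.ker op),
      (∀ x y : X, qop (Quotient.mk (Setoid.ker op) x) (Quotient.mk (Setoid.ker op) y) =
          Quotient.mk (Setoid.ker op) (op x y)) ∧
      (∀ a, Function.Bijective (qop a)) ∧
      (∀ a b c, qop (qop a b) (qop a c) = qop (qop b a) (qop b c)) := by
  have hsurj : ∀ x, Function.Surjective (op x) := fun x => (hbij x).2
  exact ⟨fun _ _ _ _ => op_op_eq_of_op_eq op hsurj hlaw, retract op hsurj hlaw,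
    retract_mk hsurj hlaw, retract_bijective hsurj hlaw, retract_law hsurj hlaw⟩

theorem stmt2 {X : Type*} [Finite X] (op : X → X → X)
    (hbij : ∀ x, Function.Bijective (op x))
    (hlaw : ∀ x y z, op (op x y) (op x z) = op (op y x) (op y z))
    (hnd : Function.Bijective fun x => op x x) :
    (∀ x y u v : X, op x = op y → op u = op v → op (op x u) = op (op y v)) ∧
    ∃ qop : Quotient (Setoid.ker op) → Quotient (Setoid.ker op) → Quotient (Setoid.ker op),
      (∀ x y : X, qop (Quotient.mk (Setoid.ker op) x) (Quotient.mk (Setoid.ker op) y) =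
          Quotient.mk (Setoid.ker op) (op x y)) ∧
      (∀ a, Function.Bijective (qop a)) ∧
      (∀ a b c, qop (qop a b) (qop a c) = qop (qop b a) (qop b c)) :=
  stmt2_general op hbij hlaw
end

section
/- Let X be a finite non-degenerate cycle set that is simple and has cardinality |X| > 2. Then X is indecomposable, i.e. the subgroup of Sym(X) generated by the left multiplications {σ_x : x ∈ X} acts transitively on X. -/
/-!
Every cycle set maps homomorphically onto the set of orbits of its permutation group, carrying
the trivial structure `y · z = z`. If there were more than one orbit, simplicity would make this
map injective, so the cycle set itself would be trivial. But a trivial cycle set with more than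
two elements is not simple: collapsing all but one point to a single point is a non-injective
homomorphism onto the two-element trivial cycle set.
-/

/-- A cycle set structure `op` on `X` is simple if `|X| > 1` and every surjective
cycle set homomorphism from `X` onto a cycle set `Y` with `|Y| > 1` is bijective. -/
def IsSimpleCycleSet {X : Type u} (op : X → X → X) : Prop :=
  1 < Nat.card X ∧
    ∀ (Y : Type u) (opY : Y → Y → Y),
      (∀ y, Function.Bijective (opY y)) →
      (∀ a b c, opY (opY a b) (opY a c) = opY (opY b a) (opY b c)) →
      ∀ f : X → Y, Function.Surjective f →
        (∀ a b, f (op a b) = opY (f a) (f b)) →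
        1 < Nat.card Y → Function.Bijective f

namespace IsSimpleCycleSet

variable {X : Type u} {op : X → X → X}

theorem injective_of_map_op_eq_right (hs : IsSimpleCycleSet op) {Y : Type u} (f : X → Y)
    (hf : Function.Surjective f) (hop : ∀ a b, f (op a b) = f b) (hY : 1 < Nat.card Y) :
    Function.Injective f :=
  (hs.2 Y (fun _ b => b) (fun _ => Function.bijective_id) (fun _ _ _ => rfl) f hf hop hY).1

theorem card_le_two_of_op_eq_right (hs : IsSimpleCycleSet op) (htriv : ∀ a b, op a b = b) :
    Nat.card X ≤ 2 := by
  classical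
  by_contra! h
  have : Finite X := Nat.finite_of_card_ne_zero (by omega)
  have := Fintype.ofFinite X
  rw [Nat.card_eq_fintype_card] at h
  obtain ⟨a, b, c, hab, hac, hbc⟩ := Fintype.two_lt_card_iff.mp h
  let f : X → ULift.{u} Bool := fun z => ⟨decide (z = a)⟩
  have hf : Function.Surjective f := by
    rintro ⟨_ | _⟩
    · exact ⟨b, by simp [f, hab.symm]⟩
    · exact ⟨a, by simp [f]⟩
  have hinj := hs.injective_of_map_op_eq_right f hf (by simp [htriv]) (by simp)
  exact hbc (hinj (by simp [f, hab.symm, hac.symm]))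

end IsSimpleCycleSet

theorem stmt3_general {X : Type u} [Finite X] (op : X → X → X)
    (hbij : ∀ x, Function.Bijective (op x))
    (hsimple : IsSimpleCycleSet op)
    (hcard : 2 < Nat.card X) :
    ∀ x y : X,
      ∃ g ∈ Subgroup.closure {s : Equiv.Perm X | ∃ z, ∀ w, s w = op z w}, g x = y := by
  set G := Subgroup.closure {s : Equiv.Perm X | ∃ z, ∀ w, s w = op z w}
  let orbitMap : X → MulAction.orbitRel.Quotient G X := Quotient.mk _
  have horbit_op : ∀ a b, orbitMap (op a b) = orbitMap b := fun a b =>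
    Quotient.sound ⟨⟨Equiv.ofBijective (op a) (hbij a), Subgroup.subset_closure ⟨a, fun _ => rfl⟩⟩,
      rfl⟩
  by_contra! hnot
  obtain ⟨x, y, hxy⟩ := hnot
  have hne : orbitMap x ≠ orbitMap y := fun h => by
    obtain ⟨⟨g, hg⟩, rfl⟩ := Quotient.exact h.symm
    exact hxy g hg rfl
  have : Nontrivial (MulAction.orbitRel.Quotient G X) := ⟨⟨_, _, hne⟩⟩
  have hinj := hsimple.injective_of_map_op_eq_right orbitMap Quotient.mk_surjective horbit_op
    Finite.one_lt_card
  have := hsimple.card_le_two_of_op_eq_right fun a b => hinj (horbit_op a b)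
  omega

theorem stmt3 {X : Type u} [Finite X] (op : X → X → X)
    (hbij : ∀ x, Function.Bijective (op x))
    (hlaw : ∀ x y z, op (op x y) (op x z) = op (op y x) (op y z))
    (hnd : Function.Bijective fun x => op x x)
    (hsimple : IsSimpleCycleSet op)
    (hcard : 2 < Nat.card X) :
    ∀ x y : X,
      ∃ g ∈ Subgroup.closure {s : Equiv.Perm X | ∃ z, ∀ w, s w = op z w}, g x = y :=
  stmt3_general op hbij hsimple hcard
end

section
/- Let X be a finite non-degenerate cycle set that is simple and whose cardinality |X| is not a prime number. Then X is irretractable, i.e. σ_x = σ_y implies x = y. -/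
universe u

/-!
If two left multiplications differ, the retraction `x ↦ σ_x` is a surjective homomorphism onto
a cycle set with more than one element, so simplicity makes it injective. Otherwise every `σ_x`
is one permutation `e` and `x · y = e y`; then any `e`-equivariant map onto a set with a
permutation is a homomorphism. If `e` is not transitive, the indicator of an orbit maps onto a
two-element set; if it is, `X` is an `n`-cycle and reduction modulo a proper divisor of `n`
maps onto a smaller cycle. Simplicity excludes both unless `n` is prime.
-/

open Function MulAction Subgroup

section Retraction

variable {X : Type u} {op : X → X → X}

theorem op_op_eq_of_op_eq (hsurj : ∀ x, Surjective (op x))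
    (hlaw : ∀ x y z, op (op x y) (op x z) = op (op y x) (op y z))
    {a a' b b' : X} (ha : op a = op a') (hb : op b = op b') :
    op (op a b) = op (op a' b') := by
  rw [show op a b = op a' b by rw [ha]]
  funext z
  obtain ⟨w, rfl⟩ := hsurj a' z
  calc op (op a' b) (op a' w) = op (op b a') (op b w) := hlaw a' b w
    _ = op (op b' a') (op b' w) := by rw [hb]
    _ = op (op a' b') (op a' w) := hlaw b' a' w

variable (op) in
def retractOp (hsurj : ∀ x, Surjective (op x))
    (hlaw : ∀ x y z, op (op x y) (op x z) = op (op y x) (op y z)) :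
    Quotient (Setoid.ker op) → Quotient (Setoid.ker op) → Quotient (Setoid.ker op) :=
  Quotient.map₂ op fun _ _ ha _ _ hb => op_op_eq_of_op_eq hsurj hlaw ha hb

theorem IsSimpleCycleSet.injective_op [Finite X] (hsimple : IsSimpleCycleSet op)
    (hsurj : ∀ x, Surjective (op x))
    (hlaw : ∀ x y z, op (op x y) (op x z) = op (op y x) (op y z))
    (hne : ∃ a b, op a ≠ op b) : Injective op := by
  let opR := retractOp op hsurj hlaw
  have hsurjR (q : Quotient (Setoid.ker op)) : Surjective (opR q) := by
    induction q using Quotient.ind with | _ a =>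
    rintro ⟨c⟩
    obtain ⟨w, rfl⟩ := hsurj a c
    exact ⟨⟦w⟧, rfl⟩
  have hlawR (p q r : Quotient (Setoid.ker op)) :
      opR (opR p q) (opR p r) = opR (opR q p) (opR q r) := by
    induction p, q, r using Quotient.inductionOn₃ with | _ a b c =>
    exact congrArg Quotient.mk'' (hlaw a b c)
  obtain ⟨a, b, hab⟩ := hne
  have hcard : 1 < Nat.card (Quotient (Setoid.ker op)) :=
    Finite.one_lt_card_iff_nontrivial.mpr ⟨⟦a⟧, ⟦b⟧, fun h => hab (Quotient.exact h)⟩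
  have hmk := hsimple.2 _ opR (fun q => (hsurjR q).bijective_of_finite) hlawR
    (Quotient.mk _) Quotient.mk_surjective (fun _ _ => rfl) hcard
  exact fun a b h => hmk.1 (Quotient.sound h)

end Retraction

section Permutation

variable {X : Type u}

theorem IsSimpleCycleSet.bijective_of_semiconj {op : X → X → X} (hsimple : IsSimpleCycleSet op)
    {e : X → X} (hop : ∀ a b, op a b = e b) {Y : Type} (g : Equiv.Perm Y) {f : X → Y}
    (hf : Surjective f) (hfg : Semiconj f e g) (hY : 1 < Nat.card Y) : Bijective f := by
  let gU := Equiv.ulift.{u}.symm.permCongr g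
  have hU := hsimple.2 (ULift.{u} Y) (fun _ => gU) (fun _ => gU.bijective) (fun _ _ _ => rfl)
    (Equiv.ulift.symm ∘ f) (Equiv.ulift.symm.surjective.comp hf)
    (fun a b => by simp [gU, hop, hfg b]) (by rwa [Nat.card_ulift])
  exact (Equiv.comp_bijective f _).1 hU

theorem minimalPeriod_eq_nat_card_of_forall_mem_orbit [Finite X] {e : Equiv.Perm X} {x₀ : X}
    (htrans : ∀ x, x ∈ orbit (zpowers e) x₀) : minimalPeriod (e • ·) x₀ = Nat.card X := by
  rw [← Nat.card_zmod (minimalPeriod _ _), ← Nat.card_congr (orbitZPowersEquiv e x₀),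
    Set.eq_univ_of_forall htrans, Nat.card_univ]

theorem exists_surjective_semiconj_add_one {e : Equiv.Perm X} {x₀ : X}
    (htrans : ∀ x, x ∈ orbit (zpowers e) x₀) {m : ℕ} (hm : m ∣ minimalPeriod (e • ·) x₀) :
    ∃ f : X → ZMod m, Surjective f ∧ Semiconj f e (Equiv.addRight 1) := by
  let f (x : X) : ZMod m := ZMod.castHom hm (ZMod m) (orbitZPowersEquiv e x₀ ⟨x, htrans x⟩)
  have hf (k : ℤ) : f ((e ^ k) x₀) = k := by
    have : orbitZPowersEquiv e x₀ ⟨(e ^ k) x₀, htrans _⟩ = k := by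
      rw [← Equiv.eq_symm_apply, orbitZPowersEquiv_symm_apply']
      rfl
    simp only [f, this, map_intCast]
  have hpow (x : X) : ∃ k : ℤ, (e ^ k) x₀ = x := by
    obtain ⟨⟨_, k, rfl⟩, hk⟩ := mem_orbit_iff.mp (htrans x)
    exact ⟨k, hk⟩
  refine ⟨f, fun c => ?_, fun x => ?_⟩
  · obtain ⟨k, rfl⟩ := ZMod.intCast_surjective c
    exact ⟨_, hf k⟩
  · obtain ⟨k, rfl⟩ := hpow x
    rw [← Equiv.Perm.mul_apply, ← zpow_one_add, hf, hf, add_comm]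
    push_cast
    rfl

end Permutation

theorem IsSimpleCycleSet.nat_card_prime_of_forall_op_eq {X : Type u} [Finite X]
    {op : X → X → X} (hsimple : IsSimpleCycleSet op) (hbij : ∀ x, Bijective (op x))
    (hconst : ∀ a b, op a = op b) : (Nat.card X).Prime := by
  classical
  have hX : 1 < Nat.card X := hsimple.1
  obtain ⟨x₀⟩ : Nonempty X := Finite.card_pos_iff.mp (by omega)
  let e := Equiv.ofBijective (op x₀) (hbij x₀)
  have hop (a b : X) : op a b = e b := congrFun (hconst a x₀) b
  by_contra hprime
  by_cases htrans : ∀ x, x ∈ orbit (zpowers e) x₀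
  · obtain ⟨m, hmX, hm, hmlt⟩ := Nat.exists_dvd_of_not_prime2 hX hprime
    rw [← minimalPeriod_eq_nat_card_of_forall_mem_orbit htrans] at hmX
    obtain ⟨f, hf, hfe⟩ := exists_surjective_semiconj_add_one htrans hmX
    have hfbij := hsimple.bijective_of_semiconj hop _ hf hfe (by rw [Nat.card_zmod]; omega)
    have := Nat.card_eq_of_bijective f hfbij
    rw [Nat.card_zmod] at this
    omega
  · obtain ⟨x₁, hx₁⟩ := not_forall.mp htrans
    let f (x : X) : Bool := decide (x ∈ orbit (zpowers e) x₀)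
    have hf : Surjective f := by
      rintro (_ | _)
      · exact ⟨x₁, by simpa [f] using hx₁⟩
      · exact ⟨x₀, by simp [f, mem_orbit_self]⟩
    have hfe : Semiconj f e (Equiv.refl Bool) := fun x => by
      have : e x = (⟨e, mem_zpowers e⟩ : zpowers e) • x := rfl
      simp only [f, this, Equiv.refl_apply, ← orbit_eq_iff, orbit_smul]
    have hfbij := hsimple.bijective_of_semiconj hop _ hf hfe (by simp)
    have := Nat.card_eq_of_bijective f hfbij
    simp only [Nat.card_eq_fintype_card, Fintype.card_bool] at this
    exact hprime (this ▸ Nat.prime_two)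

theorem stmt4_general {X : Type u} [Finite X] (op : X → X → X)
    (hbij : ∀ x, Function.Bijective (op x))
    (hlaw : ∀ x y z, op (op x y) (op x z) = op (op y x) (op y z))
    (hsimple : IsSimpleCycleSet op)
    (hcard : ¬ (Nat.card X).Prime) :
    ∀ x y : X, op x = op y → x = y := by
  by_cases hconst : ∀ a b, op a = op b
  · exact absurd (hsimple.nat_card_prime_of_forall_op_eq hbij hconst) hcard
  · push Not at hconst
    exact hsimple.injective_op (fun x => (hbij x).2) hlaw hconst

theorem stmt4 {X : Type u} [Finite X] (op : X → X → X)
    (hbij : ∀ x, Function.Bijective (op x))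
    (hlaw : ∀ x y z, op (op x y) (op x z) = op (op y x) (op y z))
    (hnd : Function.Bijective fun x => op x x)
    (hsimple : IsSimpleCycleSet op)
    (hcard : ¬ (Nat.card X).Prime) :
    ∀ x y : X, op x = op y → x = y :=
  stmt4_general op hbij hlaw hsimple hcard
end

section
/- Let A be a finite left brace. Then the binary operation a·b := λ_a^{-1}(b) makes A a non-degenerate cycle set. -/
/-- A left brace structure on an additive abelian group `A`: a group operation `mul`
(with identity `one` and inverses `inv`) satisfying `a ∘ (b + c) + a = a ∘ b + a ∘ c`. -/
structure LeftBrace (A : Type*) [AddCommGroup A] where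
  mul : A → A → A
  one : A
  inv : A → A
  mul_assoc' : ∀ a b c, mul (mul a b) c = mul a (mul b c)
  one_mul' : ∀ a, mul one a = a
  mul_one' : ∀ a, mul a one = a
  inv_mul' : ∀ a, mul (inv a) a = one
  mul_inv' : ∀ a, mul a (inv a) = one
  compat : ∀ a b c, mul a (b + c) + a = mul a b + mul a c

namespace LeftBrace

variable {A : Type*} [AddCommGroup A]

/-- The map `λ_a : b ↦ -a + a ∘ b`. -/
def lam (B : LeftBrace A) (a b : A) : A := -a + B.mul a b

/-- The cycle set operation `x · y := λ_x⁻¹ (y)` associated to a left brace. -/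
noncomputable def cop (B : LeftBrace A) (x y : A) : A :=
  @Function.invFun A A ⟨0⟩ (B.lam x) y

/-- An ideal of a left brace: a normal subgroup of `(A, ∘)` invariant under all `λ_a`. -/
def IsIdeal (B : LeftBrace A) (I : Set A) : Prop :=
  B.one ∈ I ∧ (∀ a ∈ I, ∀ b ∈ I, B.mul a b ∈ I) ∧ (∀ a ∈ I, B.inv a ∈ I) ∧
    (∀ g : A, ∀ a ∈ I, B.mul (B.mul g a) (B.inv g) ∈ I) ∧
    (∀ g : A, ∀ a ∈ I, B.lam g a ∈ I)

end LeftBrace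

/-!
The map `a ↦ λ_a` is a homomorphism from `(A, ∘)` to the permutations of `A`, and
`a ∘ λ_a⁻¹(b) = a + b`. Hence `λ_{a+b} = λ_{a ∘ (a·b)} = λ_a λ_{a·b}`, so that
`λ_{a+b}((a·b)·(a·c)) = c`; as `a + b` is symmetric in `a` and `b`, this is the cycle set
identity. The squaring map is `a ↦ λ_{a⁻¹}(a) = -a⁻¹`, a composite of two involutions.
-/

namespace LeftBrace

variable {A : Type*} [AddCommGroup A] (B : LeftBrace A)

lemma mul_zero (a : A) : B.mul a 0 = a := by
  have h := B.compat a 0 0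
  rw [add_zero] at h
  exact (add_left_cancel h).symm

lemma one_eq_zero : B.one = 0 := by
  simpa only [B.one_mul'] using (B.mul_zero B.one).symm

lemma mul_neg (a b : A) : B.mul a (-b) = a + a - B.mul a b := by
  have h := B.compat a b (-b)
  rw [add_neg_cancel, B.mul_zero] at h
  exact eq_sub_of_add_eq (by rw [add_comm]; exact h.symm)

lemma inv_involutive : Function.Involutive B.inv := fun a =>
  calc B.inv (B.inv a) = B.mul (B.mul a (B.inv a)) (B.inv (B.inv a)) := by
        rw [B.mul_inv', B.one_mul']
    _ = a := by rw [B.mul_assoc', B.mul_inv', B.mul_one']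

lemma lam_mul (a b c : A) : B.lam (B.mul a b) c = B.lam a (B.lam b c) := by
  have h : B.mul a (-b + B.mul b c) = B.mul a (-b) + B.mul a (B.mul b c) - a :=
    eq_sub_of_add_eq (B.compat a (-b) (B.mul b c))
  simp only [lam]
  rw [h, B.mul_neg, ← B.mul_assoc']
  abel

lemma lam_one (c : A) : B.lam B.one c = c := by
  rw [lam, B.one_mul', B.one_eq_zero, neg_zero, zero_add]

lemma lam_inv_lam (a c : A) : B.lam (B.inv a) (B.lam a c) = c := by
  rw [← B.lam_mul, B.inv_mul', B.lam_one]

lemma lam_lam_inv (a c : A) : B.lam a (B.lam (B.inv a) c) = c := by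
  rw [← B.lam_mul, B.mul_inv', B.lam_one]

lemma lam_bijective (a : A) : Function.Bijective (B.lam a) :=
  Function.bijective_iff_has_inverse.2 ⟨_, B.lam_inv_lam a, B.lam_lam_inv a⟩

lemma cop_eq_lam_inv (a : A) : B.cop a = B.lam (B.inv a) := by
  funext b
  apply (B.lam_bijective a).injective
  rw [B.lam_lam_inv]
  exact @Function.rightInverse_invFun A A ⟨0⟩ _ (B.lam_bijective a).surjective b

lemma cop_bijective (a : A) : Function.Bijective (B.cop a) := by
  rw [cop_eq_lam_inv]
  exact B.lam_bijective _

lemma lam_cop (a b : A) : B.lam a (B.cop a b) = b := by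
  rw [cop_eq_lam_inv, lam_lam_inv]

lemma mul_cop (a b : A) : B.mul a (B.cop a b) = a + b := by
  have h := B.lam_cop a b
  rw [lam, neg_add_eq_iff_eq_add] at h
  exact h

lemma lam_add_cop_cop (a b c : A) : B.lam (a + b) (B.cop (B.cop a b) (B.cop a c)) = c := by
  rw [← B.mul_cop a b, B.lam_mul, B.lam_cop, B.lam_cop]

lemma cop_cop_cop_comm (a b c : A) :
    B.cop (B.cop a b) (B.cop a c) = B.cop (B.cop b a) (B.cop b c) := by
  apply (B.lam_bijective (a + b)).injective
  rw [B.lam_add_cop_cop a b c, add_comm, B.lam_add_cop_cop b a c]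

lemma cop_self (a : A) : B.cop a a = -B.inv a := by
  rw [B.cop_eq_lam_inv, lam, B.inv_mul', B.one_eq_zero, add_zero]

lemma cop_self_bijective : Function.Bijective (fun a => B.cop a a) := by
  simp only [cop_self]
  exact neg_involutive.bijective.comp B.inv_involutive.bijective

end LeftBrace

theorem stmt6_general {A : Type*} [AddCommGroup A] (B : LeftBrace A) :
    (∀ a, Function.Bijective (B.cop a)) ∧
    (∀ a b c, B.cop (B.cop a b) (B.cop a c) = B.cop (B.cop b a) (B.cop b c)) ∧
    Function.Bijective (fun a => B.cop a a) :=
  ⟨B.cop_bijective, B.cop_cop_cop_comm, B.cop_self_bijective⟩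

theorem stmt6 {A : Type*} [AddCommGroup A] [Finite A] (B : LeftBrace A) :
    (∀ a, Function.Bijective (B.cop a)) ∧
    (∀ a b c, B.cop (B.cop a b) (B.cop a c) = B.cop (B.cop b a) (B.cop b c)) ∧
    Function.Bijective (fun a => B.cop a a) :=
  stmt6_general B
end

section
/- Let X be a finite non-degenerate indecomposable cycle set whose cardinality is a prime number p. Then X is simple. -/
universe u

/-!
The permutation group `G(X)` acts transitively on a set of prime size, so it acts primitively.
The fibres of a cycle set homomorphism `f` form a `G(X)`-invariant partition, because `f`
intertwines `σ_z` with the injective map `σ_{f z}`. Hence they are either singletons or all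
of `X`, and the latter is excluded by `|Y| > 1`.
-/

open Function MulAction

namespace MulAction

variable {G X Y : Type*} [Group G] [MulAction G X]

theorem isBlock_preimage_singleton {f : X → Y}
    (hf : ∀ (g : G) a b, f a = f b → f (g • a) = f (g • b)) (y : Y) :
    IsBlock G (f ⁻¹' {y}) := by
  refine isBlock_iff_smul_eq_of_mem.2 fun g a ha hga ↦ Set.ext fun x ↦ ?_
  simp only [Set.mem_smul_set_iff_inv_smul_mem, Set.mem_preimage, Set.mem_singleton_iff] at *
  constructor
  · intro hx
    simpa [← hga] using hf g _ _ (hx.trans ha.symm)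
  · intro hx
    simpa [← ha] using hf g⁻¹ _ _ (hx.trans hga.symm)

theorem IsPreprimitive.injective_or_forall_eq [IsPreprimitive G X] {f : X → Y}
    (hf : ∀ (g : G) a b, f a = f b → f (g • a) = f (g • b)) :
    Injective f ∨ ∀ a b, f a = f b := by
  refine or_iff_not_imp_right.2 fun hne a b hab ↦ ?_
  obtain ⟨c, d, hcd⟩ : ∃ c d, f c ≠ f d := by simpa using hne
  rcases IsPreprimitive.isTrivialBlock_of_isBlock (isBlock_preimage_singleton hf (f a)) with
    hsub | huniv
  · exact hsub rfl hab.symm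
  · have hfa : ∀ x, f x = f a := Set.eq_univ_iff_forall.1 huniv
    exact absurd ((hfa c).trans (hfa d).symm) hcd

end MulAction

def leftMulGroup {X : Type*} (op : X → X → X) : Subgroup (Equiv.Perm X) :=
  Subgroup.closure {s | ∃ z, ∀ w, s w = op z w}

theorem leftMulGroup_apply_eq_iff {X Y : Type*} {op : X → X → X} {opY : Y → Y → Y}
    (hinj : ∀ y, Injective (opY y)) {f : X → Y} (hf : ∀ a b, f (op a b) = opY (f a) (f b))
    {g : Equiv.Perm X} (hg : g ∈ leftMulGroup op) (a b : X) :
    f (g a) = f (g b) ↔ f a = f b := by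
  induction hg using Subgroup.closure_induction generalizing a b with
  | mem s hs =>
    obtain ⟨z, hz⟩ := hs
    simp only [hz, hf]
    exact (hinj (f z)).eq_iff
  | one => rfl
  | mul g h _ _ hg hh => exact (hg (h a) (h b)).trans (hh a b)
  | inv g _ hg => simpa using (hg (g⁻¹ a) (g⁻¹ b)).symm

theorem stmt13_general {X : Type u} (op : X → X → X)
    (p : ℕ) (hp : p.Prime) (hcard : Nat.card X = p)
    (hindec : ∀ x y : X,
      ∃ g ∈ Subgroup.closure {s : Equiv.Perm X | ∃ z, ∀ w, s w = op z w}, g x = y) :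
    IsSimpleCycleSet op := by
  refine ⟨hcard ▸ hp.one_lt, fun Y opY hbijY _ f hsurj hhom hY ↦ ⟨?_, hsurj⟩⟩
  have : IsPretransitive (leftMulGroup op) X :=
    ⟨fun x y ↦ let ⟨g, hg, hgx⟩ := hindec x y; ⟨⟨g, hg⟩, hgx⟩⟩
  have : IsPreprimitive (leftMulGroup op) X := .of_prime_card (hcard ▸ hp)
  have hcompat (g : leftMulGroup op) (a b : X) (hab : f a = f b) : f (g • a) = f (g • b) :=
    (leftMulGroup_apply_eq_iff (fun y ↦ (hbijY y).1) hhom g.2 a b).2 hab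
  refine (IsPreprimitive.injective_or_forall_eq hcompat).resolve_right fun hconst ↦ ?_
  have : Finite Y := Nat.finite_of_card_ne_zero (by omega)
  obtain ⟨y₁, y₂, hne⟩ := (Finite.one_lt_card_iff_nontrivial.1 hY).exists_pair_ne
  obtain ⟨x₁, rfl⟩ := hsurj y₁
  obtain ⟨x₂, rfl⟩ := hsurj y₂
  exact hne (hconst x₁ x₂)

theorem stmt13 {X : Type u} [Finite X] (op : X → X → X)
    (hbij : ∀ x, Function.Bijective (op x))
    (hlaw : ∀ x y z, op (op x y) (op x z) = op (op y x) (op y z))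
    (hnd : Function.Bijective fun x => op x x)
    (p : ℕ) (hp : p.Prime) (hcard : Nat.card X = p)
    (hindec : ∀ x y : X,
      ∃ g ∈ Subgroup.closure {s : Equiv.Perm X | ∃ z, ∀ w, s w = op z w}, g x = y) :
    IsSimpleCycleSet op :=
  stmt13_general op p hp hcard hindec
end
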